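/- For every integer M ≥ 2 and nonnegative integer b, η_b = 2 · ∏_{i=2^b}^{2^{b+1}-1} i/(i + M/(M-1)) satisfies 0 < η_b < 1. -/

import Mathlib

/-!
Each factor `i / (i + c)` with `c = M / (M - 1) > 1` is strictly smaller than `i / (i + 1)`, and
the product of the latter over `2^b ≤ i < 2^(b+1)` telescopes to `2^b / 2^(b+1) = 1/2`.
-/

/-- `η_b = 2 · ∏_{i=2^b}^{2^{b+1}-1} i/(i + M/(M-1))`. -/
noncomputable def eta (M : ℕ) (b : ℕ) : ℝ :=
  2 * ∏ i ∈ Finset.Ico (2 ^ b : ℕ) (2 ^ (b + 1) : ℕ),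
    (i : ℝ) / ((i : ℝ) + (M : ℝ) / ((M : ℝ) - 1))

open Finset

lemma prod_Ico_div_add_one {m : ℕ} (hm : 0 < m) {n : ℕ} (hmn : m ≤ n) :
    ∏ i ∈ Ico m n, (i : ℝ) / (i + 1) = m / n := by
  induction n, hmn using Nat.le_induction with
  | base => rw [Ico_self, prod_empty, div_self (by positivity)]
  | succ n hmn ih =>
    have hn : (0 : ℝ) < n := by exact_mod_cast hm.trans_le hmn
    rw [prod_Ico_succ_top hmn, ih]
    push_cast
    field_simp

lemma prod_Ico_div_add_lt {m n : ℕ} (hm : 0 < m) (hmn : m < n) {c : ℝ} (hc : 1 < c) :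
    ∏ i ∈ Ico m n, (i : ℝ) / (i + c) < m / n := by
  have hi : ∀ i ∈ Ico m n, (0 : ℝ) < i := fun i hi => by
    exact_mod_cast hm.trans_le (mem_Ico.mp hi).1
  rw [← prod_Ico_div_add_one hm hmn.le]
  refine prod_lt_prod_of_nonempty (fun i hi' => ?_) (fun i hi' => ?_) (nonempty_Ico.mpr hmn)
  · have := hi i hi'
    positivity
  · have := hi i hi'
    gcongr

lemma one_lt_div_sub_one {x : ℝ} (hx : 1 < x) : 1 < x / (x - 1) := by
  rw [one_lt_div (by linarith)]
  linarith

theorem stmt12 (M : ℕ) (hM : 2 ≤ M) (b : ℕ) : 0 < eta M b ∧ eta M b < 1 := by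
  have hc : 1 < (M : ℝ) / (M - 1) := one_lt_div_sub_one (by exact_mod_cast hM)
  have hlo : 0 < 2 ^ b := by positivity
  have hlt : 2 ^ b < 2 ^ (b + 1) := Nat.pow_lt_pow_right one_lt_two b.lt_succ_self
  refine ⟨?_, ?_⟩
  · refine mul_pos two_pos (prod_pos fun i hi => ?_)
    have : (0 : ℝ) < i := by exact_mod_cast hlo.trans_le (mem_Ico.mp hi).1
    positivity
  · have hhalf : ((2 ^ b : ℕ) : ℝ) / (2 ^ (b + 1) : ℕ) = 1 / 2 := by
      push_cast
      rw [pow_succ]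
      field_simp
    have := prod_Ico_div_add_lt hlo hlt hc
    rw [hhalf] at this
    unfold eta
    linarith
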